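/- arXiv:2301.02199 — 6 statements merged into one kernel-verified Lean document; each statement's English description precedes it below -/
import Mathlib

section
/- A functorial γ is a hereditary Plotkin radical if and only if it satisfies (F1), (F2), and (F3). That is: γ satisfies (F1) (f(γ(G)) ⊆ γ(f(G)) for every epimorphism f), is idempotent (γ(γ(G)) = γ(G)), satisfies that N ⊆ γ(G) whenever N ⊴ G with γ(N) = N, and satisfies (F3) (γ(G) ∩ N ⊆ γ(N) for every N ⊴ G) — if and only if γ satisfies (F1), (F2) (γ(N) ⊆ γ(G) for N ⊴ G), and (F3). -/
open scoped Pointwise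

/-! Subgroup-valued functions ("functorials") on finite groups, Plotkin's upper products,
iterated series and heights, the generalized Fitting subgroup, `p`-soluble radicals,
non-`p`-soluble length, Fitting formations, and (mutually/totally) permutable products. -/

/-- A subgroup-valued function on all finite groups. -/
abbrev GFun : Type 1 := ∀ (G : Type) [Group G] [Finite G], Subgroup G

/-- A functorial: `γ` commutes with isomorphisms, `f (γ G) = γ (f G)`. -/
def IsoInvariant (γ : GFun) : Prop :=
  ∀ (G H : Type) [Group G] [Finite G] [Group H] [Finite H] (e : G ≃* H),
    (γ G).map e.toMonoidHom = γ H

/-- Property (F1): `f (γ G) ⊆ γ (f G)` for every epimorphism `f`. -/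
def SatF1 (γ : GFun) : Prop :=
  ∀ (G H : Type) [Group G] [Finite G] [Group H] [Finite H] (f : G →* H),
    Function.Surjective f → (γ G).map f ≤ γ H

/-- Property (F2): `γ N ⊆ γ G` for every normal subgroup `N ⊴ G`. -/
def SatF2 (γ : GFun) : Prop :=
  ∀ (G : Type) [Group G] [Finite G] (N : Subgroup G), N.Normal →
    (γ ↥N).map N.subtype ≤ γ G

/-- Property (F3): `γ G ∩ N ⊆ γ N` for every normal subgroup `N ⊴ G`. -/
def SatF3 (γ : GFun) : Prop :=
  ∀ (G : Type) [Group G] [Finite G] (N : Subgroup G), N.Normal →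
    (γ G).comap N.subtype ≤ γ ↥N

/-- `γ` is idempotent: `γ (γ G) = γ G`. -/
def IdemF (γ : GFun) : Prop :=
  ∀ (G : Type) [Group G] [Finite G], (γ ↥(γ G)).map (γ G).subtype = γ G

/-- `N ⊆ γ G` for every normal subgroup `N ⊴ G` with `γ N = N`. -/
def PlotkinClosed (γ : GFun) : Prop :=
  ∀ (G : Type) [Group G] [Finite G] (N : Subgroup G), N.Normal → γ ↥N = ⊤ → N ≤ γ G

/-- `γ G` is a normal subgroup of `G` for every finite group `G`. -/
def NormalValued (γ : GFun) : Prop :=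
  ∀ (G : Type) [Group G] [Finite G], (γ G).Normal

/-- A functorial takes normal (indeed characteristic) values. -/
theorem IsoInvariant.normalValued {γ : GFun} (h : IsoInvariant γ) : NormalValued γ := by
  intro G _ _
  refine ⟨fun n hn g => ?_⟩
  have key := h G G (MulAut.conj g)
  rw [← key]
  exact ⟨n, hn, by simp [MulAut.conj]⟩

theorem normal_sSup {G : Type} [Group G] {S : Set (Subgroup G)}
    (hS : ∀ N ∈ S, N.Normal) : (sSup S).Normal := by
  have hU : sSup S = Subgroup.closure (⋃ N ∈ S, (N : Set G)) := by
    apply le_antisymm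
    · exact sSup_le fun N hN x hx =>
        Subgroup.subset_closure (Set.mem_iUnion₂.2 ⟨N, hN, hx⟩)
    · rw [Subgroup.closure_le]
      intro x hx
      obtain ⟨N, hN, hxN⟩ := Set.mem_iUnion₂.1 hx
      exact le_sSup hN hxN
  refine ⟨fun n hn g => ?_⟩
  rw [hU] at hn ⊢
  induction hn using Subgroup.closure_induction with
  | mem x hx =>
    obtain ⟨N, hN, hxN⟩ := Set.mem_iUnion₂.1 hx
    exact Subgroup.subset_closure (Set.mem_iUnion₂.2 ⟨N, hN, (hS N hN).conj_mem x hxN g⟩)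
  | one => simpa using Subgroup.one_mem _
  | mul x y hx hy ihx ihy =>
    have : g * (x * y) * g⁻¹ = (g * x * g⁻¹) * (g * y * g⁻¹) := by group
    rw [this]; exact mul_mem ihx ihy
  | inv x hx ihx =>
    have : g * x⁻¹ * g⁻¹ = (g * x * g⁻¹)⁻¹ := by group
    rw [this]; exact inv_mem ihx

theorem normal_inf {G : Type} [Group G] {M N : Subgroup G} (hM : M.Normal) (hN : N.Normal) :
    (M ⊓ N).Normal :=
  ⟨fun n hn g => ⟨hM.conj_mem n hn.1 g, hN.conj_mem n hn.2 g⟩⟩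

/-- The upper product `γ₂ ⋆ γ₁`: the preimage in `G` of `γ₁ (G ⧸ γ₂ G)`. -/
def starF (γ₂ γ₁ : GFun) (h : NormalValued γ₂) : GFun :=
  fun G _ _ =>
    letI : (γ₂ G).Normal := h G
    (γ₁ (G ⧸ γ₂ G)).comap (QuotientGroup.mk' (γ₂ G))

theorem starF_normalValued (γ₂ γ₁ : GFun) (h2 : NormalValued γ₂) (h1 : NormalValued γ₁) :
    NormalValued (starF γ₂ γ₁ h2) := by
  intro G _ _
  letI : (γ₂ G).Normal := h2 G
  exact Subgroup.Normal.comap (h1 _) _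

/-- The iterated `γ`-series of a finite group, with normality of each term. -/
def gSeriesAux (γ : GFun) (h : NormalValued γ) (G : Type) [Group G] [Finite G] :
    ℕ → {H : Subgroup G // H.Normal}
  | 0 => ⟨⊥, inferInstance⟩
  | n + 1 =>
    let P := gSeriesAux γ h G n
    letI : P.1.Normal := P.2
    ⟨(γ (G ⧸ P.1)).comap (QuotientGroup.mk' P.1), Subgroup.Normal.comap (h _) _⟩

/-- The iterated `γ`-series: `γ₍₀₎(G) = 1` and `γ₍ᵢ₊₁₎(G)` is the preimage of
`γ (G ⧸ γ₍ᵢ₎(G))`. -/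
def gSeries (γ : GFun) (h : NormalValued γ) (G : Type) [Group G] [Finite G] (n : ℕ) :
    Subgroup G := (gSeriesAux γ h G n).1

/-- The `γ`-height: the least `h` with `γ₍ₕ₎(G) = G`, or `∞` if no such `h` exists. -/
noncomputable def gHeight (γ : GFun) (h : NormalValued γ) (G : Type) [Group G] [Finite G] :
    ℕ∞ := sInf {n : ℕ∞ | ∃ m : ℕ, n = (m : ℕ∞) ∧ gSeries γ h G m = ⊤}

/-- `H/K` is a chief factor of `G`. -/
def IsChiefFactor {G : Type} [Group G] (K H : Subgroup G) : Prop :=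
  K.Normal ∧ H.Normal ∧ K < H ∧
    ∀ L : Subgroup G, L.Normal → K ≤ L → L ≤ H → L = K ∨ L = H

/-- A finite group is quasinilpotent if every element induces an inner automorphism on
every chief factor. -/
def IsQuasinilpotent (G : Type) [Group G] [Finite G] : Prop :=
  ∀ K H : Subgroup G, IsChiefFactor K H →
    ∀ g : G, ∃ h ∈ H, ∀ x ∈ H, g * x * g⁻¹ * (h * x * h⁻¹)⁻¹ ∈ K

/-- A finite group is `p`-soluble if every chief factor is a `p`-group or a `p'`-group. -/
def IsPSoluble (p : ℕ) (G : Type) [Group G] [Finite G] : Prop :=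
  ∀ K H : Subgroup G, IsChiefFactor K H →
    (∀ x ∈ H, ∃ n : ℕ, x ^ (p ^ n) ∈ K) ∨
    (∀ x ∈ H, ∃ n : ℕ, 0 < n ∧ ¬ p ∣ n ∧ x ^ n ∈ K)

/-- The generalized Fitting subgroup `F*(G)`: the largest normal quasinilpotent subgroup. -/
def genFitting : GFun := fun G _ _ => sSup {N : Subgroup G | N.Normal ∧ IsQuasinilpotent ↥N}

theorem genFitting_normal : NormalValued genFitting :=
  fun _ _ _ => normal_sSup fun _ hN => hN.1

/-- The generalized Fitting height `h*`. -/
noncomputable def hStar (G : Type) [Group G] [Finite G] : ℕ∞ :=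
  gHeight genFitting genFitting_normal G

/-- The `p`-soluble radical `R_p(G)`: the largest normal `p`-soluble subgroup. -/
def pRadical (p : ℕ) : GFun := fun G _ _ => sSup {N : Subgroup G | N.Normal ∧ IsPSoluble p ↥N}

theorem pRadical_normal (p : ℕ) : NormalValued (pRadical p) :=
  fun _ _ _ => normal_sSup fun _ hN => hN.1

/-- `F̄_p = R_p ⋆ F* ⋆ R_p`. -/
def pBarFitting (p : ℕ) : GFun :=
  starF (starF (pRadical p) genFitting (pRadical_normal p)) (pRadical p)
    (starF_normalValued _ _ (pRadical_normal p) genFitting_normal)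

theorem pBarFitting_normal (p : ℕ) : NormalValued (pBarFitting p) :=
  starF_normalValued _ _ _ (pRadical_normal p)

/-- The Frattini subgroup, as a subgroup-valued function on finite groups. -/
def frattiniF : GFun := fun G _ _ => frattini G

theorem frattiniF_normal : NormalValued frattiniF := fun G _ _ => by
  show (frattini G).Normal
  exact Subgroup.normal_of_characteristic _

/-- Förster's functorial `F̃ = Φ ⋆ F*`: `F̃(G)/Φ(G) = F*(G/Φ(G))`. -/
def tildeFitting : GFun := starF frattiniF genFitting frattiniF_normal

theorem tildeFitting_normal : NormalValued tildeFitting :=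
  starF_normalValued _ _ frattiniF_normal genFitting_normal

/-- The non-Frattini length `h̃`. -/
noncomputable def hTilde (G : Type) [Group G] [Finite G] : ℕ∞ :=
  gHeight tildeFitting tildeFitting_normal G

/-- `Q` is a (non-empty) direct product of simple groups (nonabelian ones if `nonab`). -/
def IsDirectProdOfSimple (nonab : Bool) (Q : Type) [Group Q] : Prop :=
  ∃ (n : ℕ) (S : Fin n → GrpCat.{0}), 0 < n ∧ (∀ i, IsSimpleGroup (S i)) ∧
    (nonab → ∀ i, ∃ a b : (S i), a * b ≠ b * a) ∧
    Nonempty (Q ≃* ((i : Fin n) → (S i)))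

/-- The factor `H/K` (for `K ⊴ G`) is `p`-soluble. -/
def FactorPSoluble (p : ℕ) {G : Type} [Group G] [Finite G] (K H : Subgroup G)
    (hK : K.Normal) : Prop :=
  letI : (K.subgroupOf H).Normal := hK.subgroupOf H
  IsPSoluble p (↥H ⧸ K.subgroupOf H)

/-- The factor `H/K` is a non-empty direct product of (nonabelian) simple groups. -/
def FactorSimpleProd (nonab : Bool) {G : Type} [Group G] [Finite G] (K H : Subgroup G)
    (hK : K.Normal) : Prop :=
  letI : (K.subgroupOf H).Normal := hK.subgroupOf H
  IsDirectProdOfSimple nonab (↥H ⧸ K.subgroupOf H)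

/-- `G` has a normal series `1 = G₀ ≤ G₁ ≤ ⋯ ≤ G₂ₕ₊₁ = G` in which the factors
`Gᵢ₊₁/Gᵢ` for `i` even are `p`-soluble (possibly trivial) and for `i` odd are
non-empty direct products of nonabelian simple groups. -/
def HasLambdaSeries (p : ℕ) (G : Type) [Group G] [Finite G] (h : ℕ) : Prop :=
  ∃ c : Fin (2 * h + 2) → Subgroup G, Monotone c ∧ c 0 = ⊥ ∧ c (Fin.last _) = ⊤ ∧
    ∃ hn : ∀ i, (c i).Normal,
      ∀ i : Fin (2 * h + 1),
        if (i : ℕ) % 2 = 0 then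
          FactorPSoluble p (c i.castSucc) (c i.succ) (hn _)
        else
          FactorSimpleProd true (c i.castSucc) (c i.succ) (hn _)

/-- The non-`p`-soluble length `λ_p(G)`: the least `h` admitting such a series. -/
noncomputable def lambdaP (p : ℕ) (G : Type) [Group G] [Finite G] : ℕ∞ :=
  sInf {n : ℕ∞ | ∃ h : ℕ, n = (h : ℕ∞) ∧ HasLambdaSeries p G h}

/-- A class of finite groups. -/
abbrev GClass : Type 1 := ∀ (G : Type) [Group G] [Finite G], Prop

/-- Closed under homomorphic images. -/
def QuotClosed (𝔉 : GClass) : Prop :=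
  ∀ (G H : Type) [Group G] [Finite G] [Group H] [Finite H] (f : G →* H),
    Function.Surjective f → 𝔉 G → 𝔉 H

/-- If `G/M, G/N ∈ 𝔉` then `G/(M ∩ N) ∈ 𝔉`. -/
def InterClosed (𝔉 : GClass) : Prop :=
  ∀ (G : Type) [Group G] [Finite G] (M N : Subgroup G) (hM : M.Normal) (hN : N.Normal),
    (letI := hM; 𝔉 (G ⧸ M)) → (letI := hN; 𝔉 (G ⧸ N)) →
      (letI : (M ⊓ N).Normal := normal_inf hM hN; 𝔉 (G ⧸ (M ⊓ N)))

/-- Closed under normal subgroups. -/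
def NormalClosed (𝔉 : GClass) : Prop :=
  ∀ (G : Type) [Group G] [Finite G] (N : Subgroup G), N.Normal → 𝔉 G → 𝔉 ↥N

/-- A group is in `𝔉` whenever it is the product of two normal `𝔉`-subgroups. -/
def NormalProdClosed (𝔉 : GClass) : Prop :=
  ∀ (G : Type) [Group G] [Finite G] (M N : Subgroup G), M.Normal → N.Normal →
    𝔉 ↥M → 𝔉 ↥N → M ⊔ N = ⊤ → 𝔉 G

/-- A Fitting formation. -/
def IsFittingFormation (𝔉 : GClass) : Prop :=
  QuotClosed 𝔉 ∧ InterClosed 𝔉 ∧ NormalClosed 𝔉 ∧ NormalProdClosed 𝔉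

/-- The `𝔉`-radical: the largest normal `𝔉`-subgroup. -/
def fRadical (𝔉 : GClass) : GFun := fun G _ _ => sSup {N : Subgroup G | N.Normal ∧ 𝔉 ↥N}

theorem fRadical_normal (𝔉 : GClass) : NormalValued (fRadical 𝔉) :=
  fun _ _ _ => normal_sSup fun _ hN => hN.1

/-- The `𝔉`-residual: the smallest normal subgroup with quotient in `𝔉`. -/
def fResidual (𝔉 : GClass) (G : Type) [Group G] [Finite G] : Subgroup G :=
  sInf {N : Subgroup G | ∃ hN : N.Normal, (letI := hN; 𝔉 (G ⧸ N))}

/-- The `𝔉`-height `h_𝔉`. -/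
noncomputable def fHeight (𝔉 : GClass) (G : Type) [Group G] [Finite G] : ℕ∞ :=
  gHeight (fRadical 𝔉) (fRadical_normal 𝔉) G

/-- The `n`-fold formation product `𝔉ⁿ` (with `𝔉⁰` the class of trivial groups):
`G ∈ 𝔉ⁿ⁺¹` iff the `𝔉`-residual `G^𝔉` lies in `𝔉ⁿ`. -/
def fPow (𝔉 : GClass) : ℕ → GClass
  | 0 => fun G _ _ => Subsingleton G
  | n + 1 => fun G _ _ => fPow 𝔉 n ↥(fResidual 𝔉 G)

/-- `A` is a subnormal subgroup of `G`. -/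
def IsSubnormalIn {G : Type} [Group G] (A : Subgroup G) : Prop :=
  ∃ (n : ℕ) (c : Fin (n + 1) → Subgroup G), c 0 = A ∧ c (Fin.last n) = ⊤ ∧
    ∀ i : Fin n, c i.castSucc ≤ c i.succ ∧ ((c i.castSucc).subgroupOf (c i.succ)).Normal

/-- `G` is the mutually permutable product of its subgroups `A` and `B`. -/
def MutuallyPermutable {G : Type} [Group G] (A B : Subgroup G) : Prop :=
  (A : Set G) * (B : Set G) = Set.univ ∧
  (∀ H : Subgroup G, H ≤ B → (A : Set G) * (H : Set G) = (H : Set G) * (A : Set G)) ∧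
  (∀ K : Subgroup G, K ≤ A → (B : Set G) * (K : Set G) = (K : Set G) * (B : Set G))

/-- `G` is the totally permutable product of its subgroups `A` and `B`. -/
def TotallyPermutable {G : Type} [Group G] (A B : Subgroup G) : Prop :=
  (A : Set G) * (B : Set G) = Set.univ ∧
  ∀ H K : Subgroup G, H ≤ A → K ≤ B → (H : Set G) * (K : Set G) = (K : Set G) * (H : Set G)

/-- Conjugation by `g` as an automorphism of a normal subgroup. -/
def conjNormalEquiv {G : Type} [Group G] {N : Subgroup G} (hN : N.Normal) (g : G) :
    ↥N ≃* ↥N where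
  toFun x := ⟨g * x * g⁻¹, hN.conj_mem x x.2 g⟩
  invFun x := ⟨g⁻¹ * x * g, by simpa using hN.conj_mem x x.2 g⁻¹⟩
  left_inv x := by ext; simp [mul_assoc]
  right_inv x := by ext; simp [mul_assoc]
  map_mul' x y := by ext; simp [mul_assoc]

/-- `γ N` pushed to `G` is normal when `N ⊴ G`, for any functorial `γ`. -/
theorem gamma_map_normal {γ : GFun} (hiso : IsoInvariant γ) {G : Type} [Group G] [Finite G]
    {N : Subgroup G} (hN : N.Normal) : ((γ ↥N).map N.subtype).Normal := by
  refine ⟨fun n hn g => ?_⟩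
  obtain ⟨x, hx, rfl⟩ := hn
  have key := hiso ↥N ↥N (conjNormalEquiv hN g)
  refine ⟨conjNormalEquiv hN g x, ?_, rfl⟩
  rw [← key]
  exact ⟨x, hx, rfl⟩

/-- a functorial is a hereditary Plotkin radical iff it satisfies
(F1), (F2) and (F3). -/
theorem hereditary_plotkin_radical_iff (γ : GFun) (hiso : IsoInvariant γ) :
    (SatF1 γ ∧ IdemF γ ∧ PlotkinClosed γ ∧ SatF3 γ) ↔ (SatF1 γ ∧ SatF2 γ ∧ SatF3 γ) := by
  constructor
  · rintro ⟨h1, hidem, hpl, h3⟩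
    refine ⟨h1, ?_, h3⟩
    intro G _ _ N hN
    set M : Subgroup G := (γ ↥N).map N.subtype with hM
    have hMnorm : M.Normal := gamma_map_normal hiso hN
    -- γ ↥(γ ↥N) = ⊤
    have hidemN : (γ ↥(γ ↥N)).map (γ ↥N).subtype = γ ↥N := hidem ↥N
    have htop : γ ↥(γ ↥N) = ⊤ := by
      have hinj : Function.Injective (γ ↥N).subtype := Subtype.coe_injective
      have : (γ ↥(γ ↥N)).map (γ ↥N).subtype = (⊤ : Subgroup ↥(γ ↥N)).map (γ ↥N).subtype := by
        rw [hidemN, ← MonoidHom.range_eq_map, Subgroup.subtype_range]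
      exact Subgroup.map_injective hinj this
    -- transfer along the iso ↥(γ ↥N) ≃* ↥M
    have e : ↥(γ ↥N) ≃* ↥M := Subgroup.equivMapOfInjective _ N.subtype Subtype.coe_injective
    have hMtop : γ ↥M = ⊤ := by
      have := hiso ↥(γ ↥N) ↥M e
      rw [htop] at this
      rw [← this, ← MonoidHom.range_eq_map]
      exact (MonoidHom.range_eq_top).2 e.surjective
    exact hpl G M hMnorm hMtop
  · rintro ⟨h1, h2, h3⟩
    refine ⟨h1, ?_, ?_, h3⟩
    · intro G _ _
      have hnorm : (γ G).Normal := hiso.normalValued G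
      have htop : γ ↥(γ G) = ⊤ := by
        refine top_le_iff.1 ?_
        refine le_trans ?_ (h3 G (γ G) hnorm)
        intro x _
        exact x.2
      rw [htop, ← MonoidHom.range_eq_map, Subgroup.subtype_range]
    · intro G _ _ N hN htop
      have := h2 G N hN
      rwa [htop, ← MonoidHom.range_eq_map, Subgroup.subtype_range] at this
end

section
/- Let γ₁ and γ₂ be functorials each satisfying (F1) and (F2). Then the upper product γ₂ ⋆ γ₁ satisfies (F2): (γ₂ ⋆ γ₁)(N) ⊆ (γ₂ ⋆ γ₁)(G) for every normal subgroup N of a finite group G. -/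
open scoped Pointwise

/-- the upper product of two functorials satisfying (F1) and (F2)
satisfies (F2). -/
theorem starF_satF2 (γ₁ γ₂ : GFun) (hiso₁ : IsoInvariant γ₁) (hiso₂ : IsoInvariant γ₂)
    (ha1 : SatF1 γ₁) (ha2 : SatF2 γ₁) (hb1 : SatF1 γ₂) (hb2 : SatF2 γ₂) :
    SatF2 (starF γ₂ γ₁ hiso₂.normalValued) := by
  intro G _ _ N hN x hx
  obtain ⟨y, hy, rfl⟩ := hx
  letI : (γ₂ G).Normal := hiso₂.normalValued G
  letI : (γ₂ ↥N).Normal := hiso₂.normalValued ↥N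
  simp only [starF, Subgroup.mem_comap] at hy ⊢
  set f : ↥N →* G ⧸ γ₂ G := (QuotientGroup.mk' (γ₂ G)).comp N.subtype with hf
  have hMker : γ₂ ↥N ≤ f.ker := by
    intro m hm
    have hmK : (N.subtype m) ∈ γ₂ G := hb2 G N hN ⟨m, hm, rfl⟩
    simpa [hf, MonoidHom.mem_ker, QuotientGroup.eq_one_iff] using hmK
  set g : ↥N →* f.range := f.rangeRestrict with hg
  have hMkerg : ∀ m ∈ γ₂ ↥N, g m = 1 := fun m hm =>
    Subtype.ext (by simpa [hg, MonoidHom.mem_ker] using hMker hm)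
  set q : (↥N ⧸ γ₂ ↥N) →* f.range := QuotientGroup.lift (γ₂ ↥N) g hMkerg with hq
  have hqsurj : Function.Surjective q := by
    intro z
    obtain ⟨n, hn⟩ := f.rangeRestrict_surjective z
    exact ⟨QuotientGroup.mk n, hn⟩
  have hPnorm : f.range.Normal := by
    have h1 : (N.map (QuotientGroup.mk' (γ₂ G))).Normal :=
      Subgroup.Normal.map hN _ (QuotientGroup.mk'_surjective (γ₂ G))
    have hr : f.range = N.map (QuotientGroup.mk' (γ₂ G)) := by
      rw [hf, MonoidHom.range_comp, Subgroup.range_subtype]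
    rwa [hr]
  have h1 := ha1 (↥N ⧸ γ₂ ↥N) f.range q hqsurj
  have h2 := ha2 (G ⧸ γ₂ G) f.range hPnorm
  have hm1 : q (QuotientGroup.mk y) ∈ γ₁ f.range := h1 ⟨_, hy, rfl⟩
  have hm2 : f.range.subtype (q (QuotientGroup.mk y)) ∈ γ₁ (G ⧸ γ₂ G) := h2 ⟨_, hm1, rfl⟩
  simpa [hq, hg, hf] using hm2
end

section
/- Let γ₁ and γ₂ be functorials each satisfying (F1), (F2), and (F3). Then the upper product γ₂ ⋆ γ₁ satisfies (F3): N ∩ (γ₂ ⋆ γ₁)(G) ⊆ (γ₂ ⋆ γ₁)(N) for every normal subgroup N of a finite group G. -/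
open scoped Pointwise

/-- the upper product of two functorials satisfying (F1), (F2) and (F3)
satisfies (F3). -/
theorem starF_satF3 (γ₁ γ₂ : GFun) (hiso₁ : IsoInvariant γ₁) (hiso₂ : IsoInvariant γ₂)
    (ha1 : SatF1 γ₁) (ha2 : SatF2 γ₁) (ha3 : SatF3 γ₁)
    (hb1 : SatF1 γ₂) (hb2 : SatF2 γ₂) (hb3 : SatF3 γ₂) :
    SatF3 (starF γ₂ γ₁ hiso₂.normalValued) := by
  intro G _ _ N hN
  letI : (γ₂ G).Normal := hiso₂.normalValued G
  letI : (γ₂ ↥N).Normal := hiso₂.normalValued ↥N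
  -- γ₂ N = (γ₂ G).comap N.subtype
  have key2 : γ₂ ↥N = (γ₂ G).comap N.subtype := by
    apply le_antisymm
    · intro x hx
      exact hb2 G N hN ⟨x, hx, rfl⟩
    · exact hb3 G N hN
  set π := QuotientGroup.mk' (γ₂ G) with hπ
  set M := N.map π with hMdef
  have hM : M.Normal := Subgroup.Normal.map hN π (QuotientGroup.mk'_surjective _)
  have hmem : ∀ x : ↥N, π (N.subtype x) ∈ M := fun x => ⟨x.1, x.2, rfl⟩
  let f : ↥N →* ↥M := (π.comp N.subtype).codRestrict M hmem
  have hf : Function.Surjective f := by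
    rintro ⟨q, x, hx, rfl⟩
    exact ⟨⟨x, hx⟩, rfl⟩
  have hker : f.ker = γ₂ ↥N := by
    rw [key2]
    ext x
    simp only [f, MonoidHom.mem_ker, Subgroup.mem_comap]
    constructor
    · intro h
      have : π (N.subtype x) = 1 := congrArg Subtype.val h
      simpa [π, QuotientGroup.mk'_apply, QuotientGroup.eq_one_iff] using this
    · intro h
      apply Subtype.ext
      show π (N.subtype x) = 1
      simpa [π, QuotientGroup.mk'_apply, QuotientGroup.eq_one_iff] using h
  let e : (↥N ⧸ γ₂ ↥N) ≃* ↥M :=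
    (QuotientGroup.quotientMulEquivOfEq hker.symm).trans
      (QuotientGroup.quotientKerEquivOfSurjective f hf)
  have hiso := hiso₁ _ _ e
  intro x hx
  -- hx : N.subtype x ∈ (γ₁ (G ⧸ γ₂ G)).comap π
  have hx' : π (N.subtype x) ∈ γ₁ (G ⧸ γ₂ G) := hx
  -- goal: QuotientGroup.mk' (γ₂ ↥N) x ∈ γ₁ (↥N ⧸ γ₂ ↥N)
  show QuotientGroup.mk' (γ₂ ↥N) x ∈ γ₁ (↥N ⧸ γ₂ ↥N)
  have he : e (QuotientGroup.mk' (γ₂ ↥N) x) = f x := rfl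
  have hfx : f x ∈ γ₁ ↥M := by
    apply ha3 (G ⧸ γ₂ G) M hM
    show M.subtype (f x) ∈ γ₁ (G ⧸ γ₂ G)
    exact hx'
  rw [← hiso] at hfx
  obtain ⟨y, hy, hey⟩ := hfx
  have : y = QuotientGroup.mk' (γ₂ ↥N) x := e.injective (hey.trans he.symm)
  rwa [← this]
end

section
/- Let γ be a functorial satisfying (F1), (F2) and (F3). Then h_γ(N) ≤ h_γ(G) for every normal subgroup N of a finite group G, where h_γ denotes the γ-height. -/
open scoped Pointwise

theorem comap_gSeries_le (γ : GFun) (hiso : IsoInvariant γ) (h1 : SatF1 γ) (h3 : SatF3 γ)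
    (G : Type) [Group G] [Finite G] (N : Subgroup G) (hN : N.Normal) :
    ∀ i, (gSeries γ hiso.normalValued G i).comap N.subtype ≤
      gSeries γ hiso.normalValued N i := by
  intro i
  induction i with
  | zero =>
    intro x hx
    simp only [gSeries, gSeriesAux, Subgroup.mem_comap, Subgroup.mem_bot] at hx ⊢
    exact Subtype.ext hx
  | succ i IH =>
    set K := gSeries γ hiso.normalValued G i with hK
    set L := gSeries γ hiso.normalValued N i with hL
    haveI hKn : K.Normal := (gSeriesAux γ hiso.normalValued G i).2
    haveI hLn : L.Normal := (gSeriesAux γ hiso.normalValued N i).2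
    set f : ↥N →* G ⧸ K := (QuotientGroup.mk' K).comp N.subtype with hf
    have hker : f.ker ≤ L := by
      intro x hx
      apply IH
      have : (x : G) ∈ K := by
        have := hx
        simp only [hf, MonoidHom.mem_ker, MonoidHom.comp_apply, QuotientGroup.mk'_apply,
          QuotientGroup.eq_one_iff, Subgroup.coe_subtype] at this
        exact this
      exact this
    have hrange : f.range.Normal := by
      have hr : f.range = N.map (QuotientGroup.mk' K) := by
        rw [hf, MonoidHom.range_comp, Subgroup.subtype_range]
      rw [hr]
      exact hN.map _ (QuotientGroup.mk'_surjective K)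
    set π : ↥f.range →* ↥N ⧸ L :=
      (QuotientGroup.map f.ker L (MonoidHom.id _) hker).comp
        (QuotientGroup.quotientKerEquivRange f).symm.toMonoidHom with hπ
    have hπs : Function.Surjective π := by
      intro y
      obtain ⟨x, rfl⟩ := QuotientGroup.mk_surjective y
      refine ⟨QuotientGroup.quotientKerEquivRange f (QuotientGroup.mk x), ?_⟩
      rw [hπ, MonoidHom.comp_apply, MulEquiv.coe_toMonoidHom, MulEquiv.symm_apply_apply]
      rfl
    intro x hx
    have hx' : f x ∈ γ (G ⧸ K) := by
      exact hx
    have hx2 : f.rangeRestrict x ∈ γ ↥f.range := by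
      apply h3 (G ⧸ K) f.range hrange
      exact hx'
    have hmem : π (f.rangeRestrict x) ∈ γ (↥N ⧸ L) :=
      h1 _ _ π hπs ⟨_, hx2, rfl⟩
    have hsymm : (QuotientGroup.quotientKerEquivRange f).symm (f.rangeRestrict x) =
        QuotientGroup.mk x := by
      apply (QuotientGroup.quotientKerEquivRange f).injective
      simp only [MulEquiv.apply_symm_apply]
      rfl
    have hπx : π (f.rangeRestrict x) = QuotientGroup.mk x := by
      rw [hπ, MonoidHom.comp_apply, MulEquiv.coe_toMonoidHom, hsymm]
      rfl
    show x ∈ (γ (↥N ⧸ L)).comap (QuotientGroup.mk' L)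
    rw [Subgroup.mem_comap, QuotientGroup.mk'_apply, ← hπx]
    exact hmem

/-- for a functorial satisfying (F1), (F2) and (F3),
`h_γ(N) ≤ h_γ(G)` for every normal subgroup `N ⊴ G`. -/
theorem gHeight_normal_le (γ : GFun) (hiso : IsoInvariant γ) (h1 : SatF1 γ) (h2 : SatF2 γ)
    (h3 : SatF3 γ) (G : Type) [Group G] [Finite G] (N : Subgroup G) (hN : N.Normal) :
    gHeight γ hiso.normalValued ↥N ≤ gHeight γ hiso.normalValued G := by
  apply sInf_le_sInf
  rintro n ⟨m, rfl, hm⟩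
  refine ⟨m, rfl, ?_⟩
  have h := comap_gSeries_le γ hiso h1 h3 G N hN m
  rw [hm, Subgroup.comap_top] at h
  exact top_le_iff.mp h
end

section
/- Let γ be a functorial satisfying (F1) and (F2) such that γ(H) > 1 for every nontrivial finite group H. If a finite group G = A₁ × ⋯ × Aₙ is the direct product of its normal subgroups A₁, …, Aₙ, then h_γ(G) = max{h_γ(Aᵢ) : 1 ≤ i ≤ n}. -/
open scoped Pointwise

/-! ### Auxiliary lemmas for Statement 8 -/

section Statement8Aux

variable (γ : GFun) (h : NormalValued γ)

theorem myGSeries_zero (G : Type) [Group G] [Finite G] : gSeries γ h G 0 = ⊥ := rfl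

theorem myGSeries_normal (G : Type) [Group G] [Finite G] (m : ℕ) :
    (gSeries γ h G m).Normal := (gSeriesAux γ h G m).2

theorem myGSeries_succ (G : Type) [Group G] [Finite G] (m : ℕ)
    [inst : (gSeries γ h G m).Normal] :
    gSeries γ h G (m + 1) =
      (γ (G ⧸ gSeries γ h G m)).comap (QuotientGroup.mk' (gSeries γ h G m)) := rfl

theorem myGSeries_le_succ (G : Type) [Group G] [Finite G] (m : ℕ) :
    gSeries γ h G m ≤ gSeries γ h G (m + 1) := by
  haveI : (gSeries γ h G m).Normal := myGSeries_normal γ h G m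
  rw [myGSeries_succ]
  intro x hx
  rw [Subgroup.mem_comap, QuotientGroup.mk'_apply,
    show ((x : G ⧸ gSeries γ h G m) : G ⧸ gSeries γ h G m) = 1 from
      (QuotientGroup.eq_one_iff x).2 hx]
  exact one_mem _

theorem myGSeries_mono (G : Type) [Group G] [Finite G] : Monotone (gSeries γ h G) :=
  monotone_nat_of_le_succ (myGSeries_le_succ γ h G)

theorem myGSeries_exists_top
    (hnt : ∀ (H : Type) [Group H] [Finite H], Nontrivial H → γ H ≠ ⊥)
    (G : Type) [Group G] [Finite G] : ∃ m, gSeries γ h G m = ⊤ := by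
  by_contra hc
  push_neg at hc
  have hlt : ∀ m, gSeries γ h G m < gSeries γ h G (m + 1) := by
    intro m
    refine lt_of_le_of_ne (myGSeries_le_succ γ h G m) (fun he => ?_)
    haveI : (gSeries γ h G m).Normal := myGSeries_normal γ h G m
    have hnontriv : Nontrivial (G ⧸ gSeries γ h G m) := by
      obtain ⟨x, hx⟩ : ∃ x, x ∉ gSeries γ h G m := by
        by_contra hall
        push_neg at hall
        exact hc m (eq_top_iff.2 fun y _ => hall y)
      exact ⟨⟨QuotientGroup.mk x, 1, fun hh => hx ((QuotientGroup.eq_one_iff x).1 hh)⟩⟩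
    refine hnt _ hnontriv ?_
    have h1 : γ (G ⧸ gSeries γ h G m) =
        Subgroup.map (QuotientGroup.mk' (gSeries γ h G m)) (gSeries γ h G (m + 1)) := by
      rw [myGSeries_succ]
      exact (Subgroup.map_comap_eq_self_of_surjective
        (QuotientGroup.mk'_surjective _) _).symm
    rw [h1, ← he]
    refine (Subgroup.eq_bot_iff_forall _).2 ?_
    rintro y ⟨x, hx, rfl⟩
    simpa [QuotientGroup.mk'_apply, QuotientGroup.eq_one_iff] using hx
  haveI : Finite (Subgroup G) :=
    Finite.of_injective (fun H : Subgroup G => (H : Set G)) SetLike.coe_injective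
  exact not_injective_infinite_finite _ (strictMono_nat_of_lt_succ hlt).injective

theorem myGHeight_le_iff
    (hnt : ∀ (H : Type) [Group H] [Finite H], Nontrivial H → γ H ≠ ⊥)
    (G : Type) [Group G] [Finite G] (m : ℕ) :
    gHeight γ h G ≤ (m : ℕ∞) ↔ gSeries γ h G m = ⊤ := by
  classical
  constructor
  · intro hle
    have hex := myGSeries_exists_top γ h hnt G
    have hk : gSeries γ h G (Nat.find hex) = ⊤ := Nat.find_spec hex
    have hlb : ((Nat.find hex : ℕ) : ℕ∞) ≤ gHeight γ h G := by
      refine le_sInf ?_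
      rintro x ⟨m', rfl, hm'⟩
      exact_mod_cast Nat.find_le hm'
    have hkm : Nat.find hex ≤ m := by exact_mod_cast hlb.trans hle
    exact top_unique (hk ▸ myGSeries_mono γ h G hkm)
  · intro htop
    exact sInf_le ⟨m, rfl, htop⟩

/-- (D): the image of the `γ`-series of a normal subgroup is contained in the
`γ`-series of the group. Uses (F1) and (F2). -/
theorem myGSeries_map_le (h1 : SatF1 γ) (h2 : SatF2 γ)
    (G : Type) [Group G] [Finite G] (N : Subgroup G) (hN : N.Normal) (m : ℕ) :
    (gSeries γ h ↥N m).map N.subtype ≤ gSeries γ h G m := by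
  induction m with
  | zero =>
    rw [myGSeries_zero, myGSeries_zero, Subgroup.map_bot]
  | succ m ih =>
    haveI hKn : (gSeries γ h G m).Normal := myGSeries_normal γ h G m
    haveI hMn : (gSeries γ h ↥N m).Normal := myGSeries_normal γ h ↥N m
    set K := gSeries γ h G m with hK
    set M := gSeries γ h ↥N m with hM
    set f : ↥N →* G ⧸ K := (QuotientGroup.mk' K).comp N.subtype with hf
    have hfker : M ≤ f.ker := by
      intro x hx
      have hxK : (x : G) ∈ K := ih (Subgroup.mem_map_of_mem _ hx)
      simpa [hf, QuotientGroup.eq_one_iff] using hxK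
    have hRnormal : f.range.Normal := by
      have : f.range = N.map (QuotientGroup.mk' K) := by
        rw [hf, MonoidHom.range_comp, Subgroup.range_subtype]
      rw [this]
      exact hN.map _ (QuotientGroup.mk'_surjective K)
    have hrrker : M ≤ f.rangeRestrict.ker := by
      intro x hx
      have : f x = 1 := hfker hx
      exact Subtype.ext (by simpa [MonoidHom.coe_rangeRestrict] using this)
    set g : (↥N ⧸ M) →* ↥f.range := QuotientGroup.lift M f.rangeRestrict hrrker with hg
    have hg_surj : Function.Surjective g := by
      intro y
      obtain ⟨x, hx⟩ := f.rangeRestrict_surjective y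
      exact ⟨QuotientGroup.mk x, hx⟩
    have key1 := h1 (↥N ⧸ M) (↥f.range) g hg_surj
    have key2 := h2 (G ⧸ K) f.range hRnormal
    rintro _ ⟨a, ha, rfl⟩
    replace ha : (QuotientGroup.mk' M) a ∈ γ (↥N ⧸ M) := ha
    have st1 : g ((QuotientGroup.mk' M) a) ∈ γ ↥f.range :=
      key1 (Subgroup.mem_map_of_mem _ ha)
    have st2 : f.range.subtype (g ((QuotientGroup.mk' M) a)) ∈ γ (G ⧸ K) :=
      key2 (Subgroup.mem_map_of_mem _ st1)
    have heq : f.range.subtype (g ((QuotientGroup.mk' M) a)) =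
        (QuotientGroup.mk' K) (N.subtype a) := by
      simp [hg, hf, QuotientGroup.mk'_apply, MonoidHom.coe_rangeRestrict]
    rw [heq] at st2
    exact st2

/-- (C): for an internal direct product, the projections map the `γ`-series of the
whole group into the `γ`-series of each factor. Uses (F1). -/
theorem myGSeries_pi_le (h1 : SatF1 γ)
    (G : Type) [Group G] [Finite G] (n : ℕ) (A : Fin n → Subgroup G)
    (e : (∀ i, ↥(A i)) ≃* G) (m : ℕ) :
    ∀ i, (gSeries γ h G m).map
        ((Pi.evalMonoidHom (fun j => ↥(A j)) i).comp e.symm.toMonoidHom)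
      ≤ gSeries γ h ↥(A i) m := by
  induction m with
  | zero =>
    intro i
    rw [myGSeries_zero, Subgroup.map_bot, myGSeries_zero]
  | succ m ih =>
    intro i
    haveI hSn : (gSeries γ h G m).Normal := myGSeries_normal γ h G m
    haveI hMn : ∀ j, (gSeries γ h ↥(A j) m).Normal := fun j => myGSeries_normal γ h ↥(A j) m
    haveI hMni : (gSeries γ h ↥(A i) m).Normal := hMn i
    set π : ∀ j, G →* ↥(A j) :=
      fun j => (Pi.evalMonoidHom (fun k => ↥(A k)) j).comp e.symm.toMonoidHom with hπ
    set S := gSeries γ h G m with hS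
    set ψ : G →* ∀ j, (↥(A j) ⧸ gSeries γ h ↥(A j) m) :=
      Pi.monoidHom (fun j => letI := hMn j
        (QuotientGroup.mk' (gSeries γ h ↥(A j) m)).comp (π j)) with hψ
    have hψ_surj : Function.Surjective ψ := by
      intro q
      choose a ha using fun j => QuotientGroup.mk'_surjective (gSeries γ h ↥(A j) m) (q j)
      refine ⟨e a, funext fun j => ?_⟩
      letI := hMn j
      show (QuotientGroup.mk' (gSeries γ h ↥(A j) m)) (π j (e a)) = q j
      have hcomp : π j (e a) = a j := by simp [hπ]
      rw [hcomp, ha j]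
    have hker : S ≤ ψ.ker := by
      intro x hx
      rw [MonoidHom.mem_ker]
      funext j
      have hmem : π j x ∈ gSeries γ h ↥(A j) m := ih j (Subgroup.mem_map_of_mem _ hx)
      letI := hMn j
      show (QuotientGroup.mk' (gSeries γ h ↥(A j) m)) (π j x) = 1
      simpa [QuotientGroup.eq_one_iff] using hmem
    set φ := QuotientGroup.lift S ψ hker with hφ
    have hφ_surj : Function.Surjective φ := by
      intro q
      obtain ⟨x, hx⟩ := hψ_surj q
      exact ⟨QuotientGroup.mk x, hx⟩
    have key1 := h1 (G ⧸ S) (∀ j, (↥(A j) ⧸ gSeries γ h ↥(A j) m)) φ hφ_surj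
    have key2 := h1 (∀ j, (↥(A j) ⧸ gSeries γ h ↥(A j) m)) (↥(A i) ⧸ gSeries γ h ↥(A i) m)
      (Pi.evalMonoidHom _ i) (Function.surjective_eval i)
    rintro _ ⟨a, ha, rfl⟩
    replace ha : (QuotientGroup.mk' S) a ∈ γ (G ⧸ S) := ha
    have st1 : φ ((QuotientGroup.mk' S) a) ∈ γ (∀ j, (↥(A j) ⧸ gSeries γ h ↥(A j) m)) :=
      key1 (Subgroup.mem_map_of_mem _ ha)
    have st2 : (Pi.evalMonoidHom _ i) (φ ((QuotientGroup.mk' S) a)) ∈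
        γ (↥(A i) ⧸ gSeries γ h ↥(A i) m) :=
      key2 (Subgroup.mem_map_of_mem _ st1)
    have heq : (Pi.evalMonoidHom _ i) (φ ((QuotientGroup.mk' S) a)) =
        (QuotientGroup.mk' (gSeries γ h ↥(A i) m)) (π i a) := rfl
    rw [heq] at st2
    exact st2

end Statement8Aux

/-- for a functorial satisfying (F1) and (F2) with `γ H > 1` for every
nontrivial `H`, the `γ`-height of an internal direct product of normal subgroups is the
maximum of the `γ`-heights of the factors. -/
theorem gHeight_internal_direct_product (γ : GFun) (hiso : IsoInvariant γ)
    (h1 : SatF1 γ) (h2 : SatF2 γ)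
    (hnt : ∀ (H : Type) [Group H] [Finite H], Nontrivial H → γ H ≠ ⊥)
    (G : Type) [Group G] [Finite G] (n : ℕ) (A : Fin n → Subgroup G)
    (hnorm : ∀ i, (A i).Normal) (hind : iSupIndep A) (hsup : ⨆ i, A i = ⊤) :
    gHeight γ hiso.normalValued G = ⨆ i, gHeight γ hiso.normalValued ↥(A i) := by
  set h := hiso.normalValued with hh
  have hcomm : Pairwise fun i j : Fin n => ∀ x y : G, x ∈ A i → y ∈ A j → Commute x y :=
    fun i j hij => Subgroup.commute_of_normal_of_disjoint _ _ (hnorm i) (hnorm j)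
      (hind.pairwiseDisjoint hij)
  have hbij : Function.Bijective (Subgroup.noncommPiCoprod hcomm) := by
    constructor
    · exact Subgroup.injective_noncommPiCoprod_of_iSupIndep hind
    · rw [← MonoidHom.range_eq_top, Subgroup.noncommPiCoprod_range, hsup]
  set e : (∀ i, ↥(A i)) ≃* G := MulEquiv.ofBijective _ hbij with he
  refine eq_of_forall_ge_iff fun c => ?_
  induction c using ENat.recTopCoe with
  | top => simp
  | coe m =>
    rw [iSup_le_iff, myGHeight_le_iff γ h hnt G m]
    constructor
    · intro htop i
      rw [myGHeight_le_iff γ h hnt _ m]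
      have hle := myGSeries_pi_le γ h h1 G n A e m i
      rw [htop] at hle
      refine top_unique fun y _ => ?_
      have hsurj : Function.Surjective
          ((Pi.evalMonoidHom (fun j => ↥(A j)) i).comp e.symm.toMonoidHom) :=
        (Function.surjective_eval i).comp e.symm.surjective
      obtain ⟨x, rfl⟩ := hsurj y
      exact hle ⟨x, trivial, rfl⟩
    · intro hall
      rw [← top_le_iff, ← hsup]
      refine iSup_le fun i => ?_
      have hi : gSeries γ h ↥(A i) m = ⊤ := (myGHeight_le_iff γ h hnt _ m).1 (hall i)
      have hle := myGSeries_map_le γ h h1 h2 G (A i) (hnorm i) m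
      rw [hi] at hle
      intro x hx
      exact hle ⟨⟨x, hx⟩, trivial, rfl⟩
end

section
/- Let γ be a functorial satisfying (F1) and (F2) with γ(H) > 1 for every nontrivial finite group H. If a finite group G = ⟨A₁, …, Aₙ⟩ is generated by subnormal subgroups A₁, …, Aₙ, then h_γ(G) ≤ max{h_γ(Aᵢ) : 1 ≤ i ≤ n}. If moreover γ satisfies (F3), then h_γ(G) = max{h_γ(Aᵢ) : 1 ≤ i ≤ n}. -/
open scoped Pointwise

/-! ### Auxiliary lemmas for Statement 9 -/

section Statement9Aux

variable (γ : GFun) (hn : NormalValued γ)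

theorem gSeries_normal (G : Type) [Group G] [Finite G] (n : ℕ) :
    (gSeries γ hn G n).Normal :=
  (gSeriesAux γ hn G n).2

theorem gSeries_zero (G : Type) [Group G] [Finite G] : gSeries γ hn G 0 = ⊥ := rfl

theorem gSeries_succ (G : Type) [Group G] [Finite G] (n : ℕ) :
    gSeries γ hn G (n + 1) =
      (letI := gSeries_normal γ hn G n
       (γ (G ⧸ gSeries γ hn G n)).comap (QuotientGroup.mk' (gSeries γ hn G n))) := rfl

theorem gSeries_le_succ (G : Type) [Group G] [Finite G] (n : ℕ) :
    gSeries γ hn G n ≤ gSeries γ hn G (n + 1) := by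
  letI := gSeries_normal γ hn G n
  intro x hx
  rw [gSeries_succ]
  have : QuotientGroup.mk' (gSeries γ hn G n) x = 1 := by
    rw [← MonoidHom.mem_ker, QuotientGroup.ker_mk']
    exact hx
  simp only [Subgroup.mem_comap, this]
  exact one_mem _

theorem gSeries_mono (G : Type) [Group G] [Finite G] {m k : ℕ} (h : m ≤ k) :
    gSeries γ hn G m ≤ gSeries γ hn G k := by
  induction k with
  | zero => simp_all
  | succ k ih =>
    rcases Nat.lt_or_ge m (k + 1) with hm | hm
    · exact (ih (Nat.lt_succ_iff.mp hm)).trans (gSeries_le_succ γ hn G k)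
    · have : m = k + 1 := le_antisymm h hm
      subst this; exact le_rfl

theorem gSeries_top_mono (G : Type) [Group G] [Finite G] {m k : ℕ}
    (h : gSeries γ hn G m = ⊤) (hmk : m ≤ k) : gSeries γ hn G k = ⊤ :=
  top_le_iff.mp (h ▸ gSeries_mono γ hn G hmk)

theorem gHeight_le_of_top {G : Type} [Group G] [Finite G] {m : ℕ}
    (h : gSeries γ hn G m = ⊤) : gHeight γ hn G ≤ m :=
  sInf_le ⟨m, rfl, h⟩

theorem gSeries_top_of_gHeight_le {G : Type} [Group G] [Finite G] {m : ℕ}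
    (h : gHeight γ hn G ≤ (m : ℕ∞)) : gSeries γ hn G m = ⊤ := by
  have h2 : sInf {n : ℕ∞ | ∃ k : ℕ, n = (k : ℕ∞) ∧ gSeries γ hn G k = ⊤} < (m : ℕ∞) + 1 := by
    refine lt_of_le_of_lt h ?_
    exact_mod_cast Nat.lt_succ_self m
  rw [sInf_lt_iff] at h2
  obtain ⟨a, ⟨k, rfl, hk⟩, hak⟩ := h2
  have hkm : k ≤ m := by
    have : (k : ℕ∞) < ((m + 1 : ℕ) : ℕ∞) := by exact_mod_cast hak
    exact Nat.lt_succ_iff.mp (by exact_mod_cast this)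
  exact gSeries_top_mono γ hn G hk hkm

/-- (F1) propagates along the iterated series. -/
theorem gSeries_map_le (h1 : SatF1 γ) (G H : Type) [Group G] [Finite G] [Group H] [Finite H]
    (f : G →* H) (hf : Function.Surjective f) (i : ℕ) :
    (gSeries γ hn G i).map f ≤ gSeries γ hn H i := by
  induction i with
  | zero =>
    rw [gSeries_zero, gSeries_zero]
    rintro _ ⟨x, hx, rfl⟩
    simp_all
  | succ i ih =>
    letI := gSeries_normal γ hn G i
    letI := gSeries_normal γ hn H i
    have hle : gSeries γ hn G i ≤ (gSeries γ hn H i).comap f :=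
      Subgroup.map_le_iff_le_comap.mp ih
    set f' := QuotientGroup.map (gSeries γ hn G i) (gSeries γ hn H i) f hle with hf'def
    have hf' : Function.Surjective f' := by
      intro y
      obtain ⟨z, rfl⟩ := QuotientGroup.mk'_surjective (gSeries γ hn H i) y
      obtain ⟨x, rfl⟩ := hf z
      exact ⟨QuotientGroup.mk' _ x, by simp [hf'def]⟩
    rintro _ ⟨x, hx, rfl⟩
    rw [gSeries_succ] at hx ⊢
    simp only [Subgroup.mem_comap] at hx ⊢
    have key := h1 _ _ f' hf' ⟨_, hx, rfl⟩
    have : f' (QuotientGroup.mk' (gSeries γ hn G i) x)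
        = QuotientGroup.mk' (gSeries γ hn H i) (f x) := by
      simp [hf'def]
    rwa [this] at key

theorem gHeight_le_of_surjective (h1 : SatF1 γ) (G H : Type) [Group G] [Finite G] [Group H]
    [Finite H] (f : G →* H) (hf : Function.Surjective f) :
    gHeight γ hn H ≤ gHeight γ hn G := by
  refine le_sInf ?_
  rintro _ ⟨m, rfl, hm⟩
  refine gHeight_le_of_top γ hn ?_
  rw [eq_top_iff]
  intro y _
  obtain ⟨x, rfl⟩ := hf y
  exact gSeries_map_le γ hn h1 G H f hf m ⟨x, hm ▸ Subgroup.mem_top x, rfl⟩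

theorem gHeight_congr (h1 : SatF1 γ) (G H : Type) [Group G] [Finite G] [Group H] [Finite H]
    (e : G ≃* H) : gHeight γ hn G = gHeight γ hn H :=
  le_antisymm (gHeight_le_of_surjective γ hn h1 H G e.symm.toMonoidHom e.symm.surjective)
    (gHeight_le_of_surjective γ hn h1 G H e.toMonoidHom e.surjective)

theorem gSeries_one (hiso : IsoInvariant γ) (G : Type) [Group G] [Finite G] :
    gSeries γ hn G 1 = γ G := by
  have hmap := hiso (G ⧸ (⊥ : Subgroup G)) G (QuotientGroup.quotientBot (G := G))
  have hstep : gSeries γ hn G 1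
      = (γ (G ⧸ (⊥ : Subgroup G))).comap (QuotientGroup.mk' (⊥ : Subgroup G)) := rfl
  rw [hstep, ← hmap]
  ext x
  rw [Subgroup.mem_comap, Subgroup.mem_map_equiv]
  have hsymm : (QuotientGroup.quotientBot (G := G)).symm x
      = QuotientGroup.mk' (⊥ : Subgroup G) x := rfl
  rw [hsymm]

/-- The shift lemma: the series of `G ⧸ γ₍₁₎(G)` is the shifted series of `G`. -/
theorem gSeries_shift (hiso : IsoInvariant γ) (G : Type) [Group G] [Finite G] (i : ℕ) :
    letI := gSeries_normal γ hn G 1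
    (gSeries γ hn (G ⧸ gSeries γ hn G 1) i).comap (QuotientGroup.mk' (gSeries γ hn G 1)) =
      gSeries γ hn G (i + 1) := by
  letI := gSeries_normal γ hn G 1
  induction i with
  | zero =>
    rw [gSeries_zero, MonoidHom.comap_bot, QuotientGroup.ker_mk']
  | succ i ih =>
    set N1 := gSeries γ hn G 1 with hN1def
    set Q := G ⧸ N1 with hQdef
    set π := QuotientGroup.mk' N1 with hπdef
    letI hQi := gSeries_normal γ hn Q i
    letI hGi1 := gSeries_normal γ hn G (i + 1)
    have hle : N1 ≤ gSeries γ hn G (i + 1) := gSeries_mono γ hn G (Nat.one_le_iff_ne_zero.mpr (by simp))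
    have hQi_eq : gSeries γ hn Q i = (gSeries γ hn G (i + 1)).map π := by
      rw [← ih, Subgroup.map_comap_eq_self_of_surjective (QuotientGroup.mk'_surjective N1)]
    letI : ((gSeries γ hn G (i + 1)).map π).Normal := hQi_eq ▸ hQi
    set e : (Q ⧸ gSeries γ hn Q i) ≃* (G ⧸ gSeries γ hn G (i + 1)) :=
      (QuotientGroup.quotientMulEquivOfEq hQi_eq).trans
        (QuotientGroup.quotientQuotientEquivQuotient N1 (gSeries γ hn G (i + 1)) hle)
      with hedef
    have hkey : ∀ x : G, e (QuotientGroup.mk' (gSeries γ hn Q i) (π x))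
        = QuotientGroup.mk' (gSeries γ hn G (i + 1)) x := by
      intro x
      show (QuotientGroup.quotientQuotientEquivQuotient N1 (gSeries γ hn G (i + 1)) hle)
          ((QuotientGroup.quotientMulEquivOfEq hQi_eq)
            (QuotientGroup.mk (QuotientGroup.mk x : G ⧸ N1) : Q ⧸ gSeries γ hn Q i)) =
          (QuotientGroup.mk x : G ⧸ gSeries γ hn G (i + 1))
      rw [QuotientGroup.quotientMulEquivOfEq_mk]
      exact QuotientGroup.quotientQuotientEquivQuotientAux_mk_mk N1 _ hle x
    have hγe := hiso _ _ e
    show Subgroup.comap π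
        ((γ (Q ⧸ gSeries γ hn Q i)).comap (QuotientGroup.mk' (gSeries γ hn Q i))) =
      (γ (G ⧸ gSeries γ hn G (i + 1))).comap (QuotientGroup.mk' (gSeries γ hn G (i + 1)))
    rw [← hγe, Subgroup.map_equiv_eq_comap_symm', Subgroup.comap_comap, Subgroup.comap_comap]
    congr 1

/-- An induction principle for subnormal subgroups. -/
theorem subnormal_induction {G : Type} [Group G] {P : Subgroup G → Prop}
    (htop : P ⊤)
    (hstep : ∀ A B : Subgroup G, A ≤ B → (A.subgroupOf B).Normal → P B → P A) :
    ∀ A : Subgroup G, IsSubnormalIn A → P A := by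
  suffices h : ∀ n (c : Fin (n + 1) → Subgroup G), c (Fin.last n) = ⊤ →
      (∀ i : Fin n, c i.castSucc ≤ c i.succ ∧ ((c i.castSucc).subgroupOf (c i.succ)).Normal) →
      P (c 0) by
    rintro A ⟨n, c, rfl, hlast, hc⟩
    exact h n c hlast hc
  intro n
  induction n with
  | zero =>
    intro c hlast _
    rw [show (0 : Fin 1) = Fin.last 0 from rfl, hlast]
    exact htop
  | succ n ih =>
    intro c hlast hc
    have h0 := hc 0
    rw [Fin.castSucc_zero, Fin.succ_zero_eq_one] at h0
    refine hstep _ (c 1) h0.1 h0.2 ?_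
    have hlast' : (fun i : Fin (n + 1) => c i.succ) (Fin.last n) = ⊤ := by
      show c (Fin.last n).succ = ⊤
      rw [Fin.succ_last]; exact hlast
    have hc' : ∀ i : Fin n, (fun j : Fin (n + 1) => c j.succ) i.castSucc ≤
        (fun j : Fin (n + 1) => c j.succ) i.succ ∧
        (((fun j : Fin (n + 1) => c j.succ) i.castSucc).subgroupOf
          ((fun j : Fin (n + 1) => c j.succ) i.succ)).Normal := by
      intro i
      show c i.castSucc.succ ≤ c i.succ.succ ∧
        ((c i.castSucc.succ).subgroupOf (c i.succ.succ)).Normal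
      rw [Fin.succ_castSucc]
      exact hc i.succ
    have key := ih (fun i => c i.succ) hlast' hc'
    have hzero : (fun i : Fin (n + 1) => c i.succ) 0 = c 1 := by
      show c (0 : Fin (n + 1)).succ = c 1
      rw [Fin.succ_zero_eq_one]
    rwa [Fin.succ_zero_eq_one] at key

theorem IsSubnormalIn.of_normal_le {G : Type} [Group G] {A B : Subgroup G} (hAB : A ≤ B)
    (hN : (A.subgroupOf B).Normal) (hB : IsSubnormalIn B) : IsSubnormalIn A := by
  obtain ⟨n, c, hc0, hlast, hc⟩ := hB
  refine ⟨n + 1, Fin.cases A c, by simp, ?_, ?_⟩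
  · show Fin.cases (motive := fun _ => Subgroup G) A c ((Fin.last n).succ) = ⊤
    rw [Fin.cases_succ]
    exact hlast
  · intro i
    refine Fin.cases ?_ ?_ i
    · show Fin.cases (motive := fun _ => Subgroup G) A c ((0 : Fin (n + 1)).castSucc) ≤
          Fin.cases (motive := fun _ => Subgroup G) A c ((0 : Fin (n + 1)).succ) ∧
        ((Fin.cases (motive := fun _ => Subgroup G) A c
            ((0 : Fin (n + 1)).castSucc)).subgroupOf
          (Fin.cases (motive := fun _ => Subgroup G) A c ((0 : Fin (n + 1)).succ))).Normal
      have e1 : Fin.cases (motive := fun _ => Subgroup G) A c ((0 : Fin (n + 1)).castSucc)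
          = A := by rw [Fin.castSucc_zero, Fin.cases_zero]
      have e2 : Fin.cases (motive := fun _ => Subgroup G) A c ((0 : Fin (n + 1)).succ)
          = B := by rw [Fin.cases_succ, hc0]
      rw [e1, e2]
      exact ⟨hAB, hN⟩
    · intro j
      show Fin.cases (motive := fun _ => Subgroup G) A c ((j.succ).castSucc) ≤
          Fin.cases (motive := fun _ => Subgroup G) A c ((j.succ).succ) ∧
        ((Fin.cases (motive := fun _ => Subgroup G) A c
            ((j.succ).castSucc)).subgroupOf
          (Fin.cases (motive := fun _ => Subgroup G) A c ((j.succ).succ))).Normal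
      have e1 : Fin.cases (motive := fun _ => Subgroup G) A c ((j.succ).castSucc)
          = c j.castSucc := by rw [← Fin.succ_castSucc, Fin.cases_succ]
      have e2 : Fin.cases (motive := fun _ => Subgroup G) A c ((j.succ).succ)
          = c j.succ := by rw [Fin.cases_succ]
      rw [e1, e2]
      exact hc j

theorem IsSubnormalIn.map {G H : Type} [Group G] [Group H] {A : Subgroup G} (f : G →* H)
    (hf : Function.Surjective f) (h : IsSubnormalIn A) : IsSubnormalIn (A.map f) := by
  refine subnormal_induction (P := fun A => IsSubnormalIn (A.map f)) ?_ ?_ A h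
  · show IsSubnormalIn (Subgroup.map f ⊤)
    rw [Subgroup.map_top_of_surjective f hf]
    exact ⟨0, fun _ => ⊤, rfl, rfl, fun i => i.elim0⟩
  · intro A B hAB hNorm hPB
    refine IsSubnormalIn.of_normal_le (Subgroup.map_mono hAB) ?_ hPB
    constructor
    rintro ⟨y, hyB⟩ hy ⟨z, hzB⟩
    rw [Subgroup.mem_subgroupOf] at hy ⊢
    simp only at hy ⊢
    obtain ⟨a, ha, rfl⟩ := hy
    obtain ⟨b, hb, rfl⟩ := hzB
    have hconj : b * a * b⁻¹ ∈ A := by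
      have := hNorm.conj_mem ⟨a, hAB ha⟩ (by rwa [Subgroup.mem_subgroupOf]) ⟨b, hb⟩
      rwa [Subgroup.mem_subgroupOf] at this
    exact ⟨b * a * b⁻¹, hconj, by simp [mul_assoc]⟩

/-- (F2) extends to subnormal subgroups. -/
theorem map_gamma_le_of_subnormal (hiso : IsoInvariant γ) (h2 : SatF2 γ)
    {G : Type} [Group G] [Finite G] {A : Subgroup G} (hA : IsSubnormalIn A) :
    (γ ↥A).map A.subtype ≤ γ G := by
  refine subnormal_induction (P := fun A => (γ ↥A).map A.subtype ≤ γ G) ?_ ?_ A hA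
  · rw [← hiso ↥(⊤ : Subgroup G) G Subgroup.topEquiv]
    rintro _ ⟨x, hx, rfl⟩
    exact ⟨x, hx, rfl⟩
  · intro A B hAB hN ihB
    have hgamma := hiso _ _ (Subgroup.subgroupOfEquivOfLe hAB)
    have hF2 := h2 ↥B (A.subgroupOf B) hN
    rintro _ ⟨x, hx, rfl⟩
    rw [← hgamma] at hx
    obtain ⟨y, hy, hyx⟩ := hx
    have hcoe : ((y : ↥B) : G) = (x : G) := by
      rw [← hyx]; rfl
    rw [Subgroup.coe_subtype, ← hcoe]
    exact ihB ⟨(y : ↥B), hF2 ⟨y, hy, rfl⟩, rfl⟩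

/-- The core claim: a subnormal subgroup of `γ`-height at most `h` is contained in the
`h`-th term of the series of the ambient group. -/
theorem le_gSeries_of_subnormal (hiso : IsoInvariant γ) (h1 : SatF1 γ) (h2 : SatF2 γ) :
    ∀ (h : ℕ) (G : Type) [Group G] [Finite G] (A : Subgroup G), IsSubnormalIn A →
      gSeries γ hn ↥A h = ⊤ → A ≤ gSeries γ hn G h := by
  intro h
  induction h with
  | zero =>
    intro G _ _ A hA htop
    rw [gSeries_zero] at htop ⊢
    intro x hx
    have : (⟨x, hx⟩ : ↥A) ∈ (⊥ : Subgroup ↥A) := htop ▸ Subgroup.mem_top _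
    rw [Subgroup.mem_bot] at this ⊢
    exact congrArg Subtype.val this
  | succ h ih =>
    intro G _ _ A hA htop
    letI := gSeries_normal γ hn G 1
    set N1 := gSeries γ hn G 1 with hN1def
    set π := QuotientGroup.mk' N1 with hπdef
    have hπ : Function.Surjective π := QuotientGroup.mk'_surjective N1
    -- the image of A is subnormal in the quotient
    have hAbarsub : IsSubnormalIn (A.map π) := hA.map π hπ
    -- the restriction of π to A
    set θ : ↥A →* ↥(A.map π) := π.subgroupMap A with hθdef
    have hθ : Function.Surjective θ := π.subgroupMap_surjective A
    letI := gSeries_normal γ hn ↥A 1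
    have hK : gSeries γ hn ↥A 1 ≤ θ.ker := by
      intro x hx
      rw [gSeries_one γ hn hiso] at hx
      have hxG : (x : G) ∈ γ G := map_gamma_le_of_subnormal γ hiso h2 hA ⟨x, hx, rfl⟩
      rw [← gSeries_one γ hn hiso, ← hN1def] at hxG
      rw [MonoidHom.mem_ker]
      ext
      show π (x : G) = 1
      rw [hπdef, QuotientGroup.mk'_apply, QuotientGroup.eq_one_iff]
      exact hxG
    set ρ : (↥A ⧸ gSeries γ hn ↥A 1) →* ↥(A.map π) := QuotientGroup.lift _ θ hK with hρdef
    have hρ : Function.Surjective ρ := by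
      intro y
      obtain ⟨x, rfl⟩ := hθ y
      exact ⟨QuotientGroup.mk x, rfl⟩
    -- the series of the quotient of A reaches the top at step h
    have hAq : gSeries γ hn (↥A ⧸ gSeries γ hn ↥A 1) h = ⊤ := by
      have hshift := gSeries_shift γ hn hiso ↥A h
      rw [htop] at hshift
      rw [eq_top_iff]
      intro y _
      obtain ⟨x, rfl⟩ := QuotientGroup.mk'_surjective (gSeries γ hn ↥A 1) y
      have : x ∈ (gSeries γ hn (↥A ⧸ gSeries γ hn ↥A 1) h).comap
          (QuotientGroup.mk' (gSeries γ hn ↥A 1)) := hshift ▸ Subgroup.mem_top x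
      exact this
    -- hence the series of the image of A reaches the top at step h
    have hAbartop : gSeries γ hn ↥(A.map π) h = ⊤ := by
      rw [eq_top_iff]
      intro y _
      obtain ⟨x, rfl⟩ := hρ y
      exact gSeries_map_le γ hn h1 _ _ ρ hρ h ⟨x, hAq ▸ Subgroup.mem_top x, rfl⟩
    have hAbarle := ih (G ⧸ N1) (A.map π) hAbarsub hAbartop
    have hshiftG := gSeries_shift γ hn hiso G h
    intro x hx
    rw [← hshiftG]
    exact hAbarle ⟨x, hx, rfl⟩

/-- (F3) propagates along the iterated series, for normal subgroups. -/
theorem comap_gSeries_le_of_normal (hiso : IsoInvariant γ) (h1 : SatF1 γ) (h3 : SatF3 γ) :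
    ∀ (i : ℕ) (G : Type) [Group G] [Finite G] (N : Subgroup G), N.Normal →
      (gSeries γ hn G i).comap N.subtype ≤ gSeries γ hn ↥N i := by
  intro i
  induction i with
  | zero =>
    intro G _ _ N _
    rw [gSeries_zero, gSeries_zero, MonoidHom.comap_bot, Subgroup.ker_subtype]
  | succ i ih =>
    intro G _ _ N hN
    letI := gSeries_normal γ hn G i
    letI := gSeries_normal γ hn ↥N i
    set Gi := gSeries γ hn G i with hGidef
    set Ni := gSeries γ hn ↥N i with hNidef
    set π := QuotientGroup.mk' Gi with hπdef
    have hπ : Function.Surjective π := QuotientGroup.mk'_surjective Gi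
    haveI hNbar : (N.map π).Normal := hN.map π hπ
    set ρ : ↥N →* ↥(N.map π) := π.subgroupMap N with hρdef
    have hρ : Function.Surjective ρ := π.subgroupMap_surjective N
    have hker : ρ.ker ≤ Ni.comap (MonoidHom.id ↥N) := by
      intro x hx
      rw [MonoidHom.mem_ker] at hx
      have hx1 : π (x : G) = 1 := congrArg Subtype.val hx
      rw [hπdef, QuotientGroup.mk'_apply, QuotientGroup.eq_one_iff] at hx1
      exact ih G N hN hx1
    set e1 := QuotientGroup.quotientKerEquivOfSurjective ρ hρ with he1def
    set τ : ↥(N.map π) →* (↥N ⧸ Ni) :=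
      (QuotientGroup.map ρ.ker Ni (MonoidHom.id ↥N) hker).comp e1.symm.toMonoidHom with hτdef
    have hτρ : ∀ x : ↥N, τ (ρ x) = QuotientGroup.mk x := by
      intro x
      have he1x : e1 (QuotientGroup.mk x) = ρ x := rfl
      rw [hτdef, MonoidHom.comp_apply]
      rw [show e1.symm.toMonoidHom (ρ x) = e1.symm (ρ x) from rfl, ← he1x,
        MulEquiv.symm_apply_apply]
      rfl
    have hτ : Function.Surjective τ := by
      intro y
      obtain ⟨x, rfl⟩ := QuotientGroup.mk'_surjective Ni y
      exact ⟨ρ x, by rw [hτρ]; rfl⟩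
    intro x hx
    rw [Subgroup.mem_comap] at hx
    rw [gSeries_succ] at hx
    rw [Subgroup.mem_comap] at hx
    -- ρ x lies in γ of the image of N
    have hρx : ρ x ∈ γ ↥(N.map π) := by
      apply h3 (G ⧸ Gi) (N.map π) hNbar
      rw [Subgroup.mem_comap]
      exact hx
    have hτx : τ (ρ x) ∈ γ (↥N ⧸ Ni) := h1 _ _ τ hτ ⟨ρ x, hρx, rfl⟩
    rw [hτρ] at hτx
    rw [gSeries_succ, Subgroup.mem_comap]
    exact hτx

theorem gHeight_le_of_normal (hiso : IsoInvariant γ) (h1 : SatF1 γ) (h3 : SatF3 γ)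
    {G : Type} [Group G] [Finite G] {N : Subgroup G} (hN : N.Normal) :
    gHeight γ hn ↥N ≤ gHeight γ hn G := by
  refine le_sInf ?_
  rintro _ ⟨m, rfl, hm⟩
  refine gHeight_le_of_top γ hn ?_
  rw [eq_top_iff]
  intro y _
  exact comap_gSeries_le_of_normal γ hn hiso h1 h3 m G N hN
    (by rw [Subgroup.mem_comap, hm]; exact Subgroup.mem_top _)

theorem gHeight_le_of_subnormal (hiso : IsoInvariant γ) (h1 : SatF1 γ) (h3 : SatF3 γ)
    {G : Type} [Group G] [Finite G] {A : Subgroup G} (hA : IsSubnormalIn A) :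
    gHeight γ hn ↥A ≤ gHeight γ hn G := by
  refine subnormal_induction (P := fun A => gHeight γ hn ↥A ≤ gHeight γ hn G) ?_ ?_ A hA
  · exact le_of_eq (gHeight_congr γ hn h1 _ _ Subgroup.topEquiv)
  · intro A B hAB hNorm ihB
    calc gHeight γ hn ↥A
        = gHeight γ hn ↥(A.subgroupOf B) :=
          (gHeight_congr γ hn h1 _ _ (Subgroup.subgroupOfEquivOfLe hAB)).symm
      _ ≤ gHeight γ hn ↥B := gHeight_le_of_normal γ hn hiso h1 h3 hNorm
      _ ≤ gHeight γ hn G := ihB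

end Statement9Aux
/-- for a functorial satisfying (F1) and (F2) with `γ H > 1` for every
nontrivial `H`, the `γ`-height of a join of subnormal subgroups is at most the maximum of
their `γ`-heights, with equality if `γ` moreover satisfies (F3). -/
theorem gHeight_join_subnormal (γ : GFun) (hiso : IsoInvariant γ) (h1 : SatF1 γ) (h2 : SatF2 γ)
    (hnt : ∀ (H : Type) [Group H] [Finite H], Nontrivial H → γ H ≠ ⊥)
    (G : Type) [Group G] [Finite G] (n : ℕ) (A : Fin n → Subgroup G)
    (hsub : ∀ i, IsSubnormalIn (A i)) (hsup : ⨆ i, A i = ⊤) :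
    gHeight γ hiso.normalValued G ≤ (⨆ i, gHeight γ hiso.normalValued ↥(A i)) ∧
      (SatF3 γ →
        gHeight γ hiso.normalValued G = ⨆ i, gHeight γ hiso.normalValued ↥(A i)) := by
  set hnv := hiso.normalValued with hnvdef
  have hle : gHeight γ hnv G ≤ ⨆ i, gHeight γ hnv ↥(A i) := by
    by_cases hs : (⨆ i, gHeight γ hnv ↥(A i)) = ⊤
    · rw [hs]; exact le_top
    · obtain ⟨m, hm⟩ := WithTop.ne_top_iff_exists.mp hs
      have hm' : (m : ℕ∞) = ⨆ i, gHeight γ hnv ↥(A i) := hm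
      rw [← hm']
      refine gHeight_le_of_top γ hnv ?_
      rw [eq_top_iff, ← hsup]
      refine iSup_le fun i => ?_
      refine le_gSeries_of_subnormal γ hnv hiso h1 h2 m G (A i) (hsub i) ?_
      refine gSeries_top_of_gHeight_le γ hnv ?_
      rw [hm']
      exact le_iSup (fun i => gHeight γ hnv ↥(A i)) i
  refine ⟨hle, fun h3 => ?_⟩
  refine le_antisymm hle (iSup_le fun i => ?_)
  exact gHeight_le_of_subnormal γ hnv hiso h1 h3 (hsub i)
end
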